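/- Let α, β, γ : ℝ → ℝ be functions of the time step ε with α(ε) ≠ 0 and α(−ε) ≠ 0, and let A(ε) = [[β(ε)/α(ε), 1/α(ε)], [γ(ε)β(ε) − (α(ε)² + β(ε)²)/α(ε), γ(ε) − β(ε)/α(ε)]]. Then A(−ε) = A(ε)⁻¹ (time-reversibility of the map) holds if and only if α(−ε) = −α(ε) and γ(ε) = (β(ε) − β(−ε))/α(ε). -/

import Mathlib

/-!
Since `det A(ε) = 1`, the inverse of `A(ε)` is its adjugate, so `A(-ε) = A(ε)⁻¹` is four scalar
equations. The upper right entry gives `α(-ε) = -α(ε)`; with it, the diagonal entries say that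
`γ(ε) = (β(ε) - β(-ε))/α(ε)` holds at `ε` and at `-ε`, and these two relations already force the
lower left entry.
-/

theorem Matrix.inv_fin_two_of_det_eq_one {R : Type*} [CommRing R] {a b c d : R}
    (h : (!![a, b; c, d] : Matrix (Fin 2) (Fin 2) R).det = 1) :
    (!![a, b; c, d])⁻¹ = !![d, -b; -c, a] := by
  rw [Matrix.inv_def, h, Ring.inverse_one, one_smul, Matrix.adjugate_fin_two_of]

noncomputable def stepMatrix (a b g : ℝ) : Matrix (Fin 2) (Fin 2) ℝ :=
  !![b / a, 1 / a; g * b - (a ^ 2 + b ^ 2) / a, g - b / a]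

theorem det_stepMatrix {a : ℝ} (ha : a ≠ 0) (b g : ℝ) : (stepMatrix a b g).det = 1 := by
  rw [stepMatrix, Matrix.det_fin_two_of]
  field_simp
  ring

theorem inv_stepMatrix {a : ℝ} (ha : a ≠ 0) (b g : ℝ) :
    (stepMatrix a b g)⁻¹ = !![g - b / a, -(1 / a); -(g * b - (a ^ 2 + b ^ 2) / a), b / a] :=
  Matrix.inv_fin_two_of_det_eq_one (det_stepMatrix ha b g)

theorem stepMatrix_eq_inv_iff {a a' : ℝ} (ha : a ≠ 0) (ha' : a' ≠ 0) (b b' g g' : ℝ) :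
    stepMatrix a' b' g' = (stepMatrix a b g)⁻¹ ↔
      a' = -a ∧ g = (b - b') / a ∧ g' = (b' - b) / a' := by
  rw [inv_stepMatrix ha, stepMatrix]
  simp only [EmbeddingLike.apply_eq_iff_eq, Matrix.vecCons_inj, and_true]
  constructor
  · rintro ⟨⟨h00, h01⟩, -, h11⟩
    have hodd : a' = -a := by
      field_simp at h01
      linarith
    subst hodd
    refine ⟨rfl, ?_, ?_⟩
    · field_simp at h00 ⊢
      linarith
    · field_simp at h11 ⊢
      linarith
  · rintro ⟨rfl, rfl, rfl⟩
    refine ⟨⟨?_, ?_⟩, ?_, ?_⟩ <;> field_simp <;> ring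

/-- Time-reversibility criterion: for the family of linear maps with matrix
`A(ε) = [[β/α, 1/α], [γβ - (α² + β²)/α, γ - β/α]]` (all coefficients functions of `ε`),
one has `A(-ε) = A(ε)⁻¹` for all `ε` if and only if
`α(-ε) = -α(ε)` and `γ(ε) = (β(ε) - β(-ε))/α(ε)` for all `ε`. -/
theorem time_reversibility_criterion
    (α β γ : ℝ → ℝ) (hα : ∀ ε : ℝ, α ε ≠ 0)
    (A : ℝ → Matrix (Fin 2) (Fin 2) ℝ)
    (hA : ∀ ε : ℝ, A ε
      = !![β ε / α ε, 1 / α ε;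
           γ ε * β ε - (α ε ^ 2 + β ε ^ 2) / α ε, γ ε - β ε / α ε]) :
    (∀ ε : ℝ, A (-ε) = (A ε)⁻¹) ↔
      ((∀ ε : ℝ, α (-ε) = -α ε) ∧ (∀ ε : ℝ, γ ε = (β ε - β (-ε))/α ε)) := by
  have reversible_iff (ε : ℝ) := stepMatrix_eq_inv_iff (hα ε) (hα (-ε)) (β ε) (β (-ε)) (γ ε) (γ (-ε))
  simp only [hA]
  constructor
  · intro h
    exact ⟨fun ε => ((reversible_iff ε).1 (h ε)).1, fun ε => ((reversible_iff ε).1 (h ε)).2.1⟩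
  · rintro ⟨hodd, hγ⟩ ε
    exact (reversible_iff ε).2 ⟨hodd ε, hγ ε, by simpa only [neg_neg] using hγ (-ε)⟩
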